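/- Let M be a negative definite symmetric real n×n matrix with nonnegative off-diagonal entries whose associated graph is connected, and let a be a real vector with (Ma)_j ≥ 0 for all j. Then either a_i = 0 for all i, or a_i < 0 for all i. -/

import Mathlib

/-!
Write `a = a⁺ - a⁻`. Since the off-diagonal entries of `M` are nonnegative and `a⁺ i * a⁻ i = 0`,
`a⁺ ⬝ᵥ M *ᵥ a⁻ ≥ 0`; together with `M *ᵥ a ≥ 0` this gives `a⁺ ⬝ᵥ M *ᵥ a⁺ ≥ 0`, so negative
definiteness forces `a⁺ = 0`, i.e. `a ≤ 0`. If moreover `a i = 0`, then `(M *ᵥ a) i` is a sum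
of nonpositive terms that is nonnegative, so `a j = 0` for every neighbour `j` of `i`, and
connectedness spreads the zero to all indices.
-/

open Matrix

variable {ι R : Type*} [Fintype ι] [CommRing R] [LinearOrder R] [IsStrictOrderedRing R]

theorem posPart_mul_negPart_eq_zero (x : R) : x⁺ * x⁻ = 0 := by
  rcases le_total x 0 with hx | hx
  · rw [posPart_eq_zero.2 hx, zero_mul]
  · rw [negPart_eq_zero.2 hx, mul_zero]

namespace Matrix

variable {M : Matrix ι ι R}

theorem posPart_dotProduct_mulVec_negPart_nonneg (hoff : ∀ i j, i ≠ j → 0 ≤ M i j)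
    (a : ι → R) : 0 ≤ a⁺ ⬝ᵥ M *ᵥ a⁻ := by
  simp only [dotProduct, mulVec, Finset.mul_sum]
  refine Finset.sum_nonneg fun i _ => Finset.sum_nonneg fun j _ => ?_
  rcases eq_or_ne i j with rfl | hij
  · rw [mul_left_comm, Pi.posPart_apply, Pi.negPart_apply, posPart_mul_negPart_eq_zero,
      mul_zero]
  · exact mul_nonneg (posPart_nonneg _) (mul_nonneg (hoff i j hij) (negPart_nonneg _))

theorem nonpos_of_mulVec_nonneg (hneg : ∀ x : ι → R, x ≠ 0 → x ⬝ᵥ M *ᵥ x < 0)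
    (hoff : ∀ i j, i ≠ j → 0 ≤ M i j) {a : ι → R} (ha : ∀ j, 0 ≤ (M *ᵥ a) j) : a ≤ 0 := by
  rw [← posPart_eq_zero]
  by_contra hpos
  have hsplit : a⁺ = a + a⁻ := eq_add_of_sub_eq (posPart_sub_negPart a)
  have hquad : 0 ≤ a⁺ ⬝ᵥ M *ᵥ a⁺ := by
    calc 0 ≤ a⁺ ⬝ᵥ M *ᵥ a + a⁺ ⬝ᵥ M *ᵥ a⁻ :=
          add_nonneg (dotProduct_nonneg_of_nonneg (posPart_nonneg a) ha)
            (posPart_dotProduct_mulVec_negPart_nonneg hoff a)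
      _ = a⁺ ⬝ᵥ M *ᵥ a⁺ := by
          conv_rhs => rw [hsplit]
          rw [mulVec_add, dotProduct_add, ← hsplit]
  exact (hneg _ hpos).not_ge hquad

theorem eq_zero_of_mulVec_nonneg_of_pos (hoff : ∀ i j, i ≠ j → 0 ≤ M i j) {a : ι → R}
    (hle : a ≤ 0) {i j : ι} (ha : 0 ≤ (M *ᵥ a) i) (hi : a i = 0) (hij : 0 < M i j) :
    a j = 0 := by
  have hterm : ∀ k ∈ Finset.univ, M i k * a k ≤ 0 := by
    intro k _
    rcases eq_or_ne i k with rfl | hik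
    · rw [hi, mul_zero]
    · exact mul_nonpos_of_nonneg_of_nonpos (hoff i k hik) (hle k)
  have hsum : ∑ k, M i k * a k = 0 := le_antisymm (Finset.sum_nonpos hterm) ha
  have hj := (Finset.sum_eq_zero_iff_of_nonpos hterm).1 hsum j (Finset.mem_univ j)
  exact (mul_eq_zero.1 hj).resolve_left hij.ne'

end Matrix

theorem neg_def_connected_dichotomy_general {n : ℕ} (M : Matrix (Fin n) (Fin n) ℝ)
    (hneg : ∀ x : Fin n → ℝ, x ≠ 0 → x ⬝ᵥ M.mulVec x < 0)
    (hoff : ∀ i j : Fin n, i ≠ j → 0 ≤ M i j)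
    (hconn : ∀ i j : Fin n, Relation.ReflTransGen (fun k l => k ≠ l ∧ 0 < M k l) i j)
    (a : Fin n → ℝ) (ha : ∀ j, 0 ≤ M.mulVec a j) :
    (∀ i, a i = 0) ∨ (∀ i, a i < 0) := by
  have hle : a ≤ 0 := nonpos_of_mulVec_nonneg hneg hoff ha
  by_cases hzero : ∃ i, a i = 0
  · obtain ⟨i₀, hi₀⟩ := hzero
    refine Or.inl fun j => ?_
    induction hconn i₀ j with
    | refl => exact hi₀
    | tail _ hedge ih => exact eq_zero_of_mulVec_nonneg_of_pos hoff hle (ha _) ih hedge.2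
  · exact Or.inr fun i => (hle i).lt_of_ne fun hi => hzero ⟨i, hi⟩

/-- Key lemma, connected case: if `M` is a negative definite symmetric real
matrix with nonnegative off-diagonal entries, whose associated graph (edges
where `M i j > 0`, `i ≠ j`) is connected, and `(M a)_j ≥ 0` for all `j`, then
either `a_i = 0` for all `i` or `a_i < 0` for all `i`. -/
theorem neg_def_connected_dichotomy {n : ℕ} (M : Matrix (Fin n) (Fin n) ℝ)
    (hsymm : M.IsSymm)
    (hneg : ∀ x : Fin n → ℝ, x ≠ 0 → x ⬝ᵥ M.mulVec x < 0)
    (hoff : ∀ i j : Fin n, i ≠ j → 0 ≤ M i j)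
    (hconn : ∀ i j : Fin n, Relation.ReflTransGen (fun k l => k ≠ l ∧ 0 < M k l) i j)
    (a : Fin n → ℝ) (ha : ∀ j, 0 ≤ M.mulVec a j) :
    (∀ i, a i = 0) ∨ (∀ i, a i < 0) :=
  neg_def_connected_dichotomy_general M hneg hoff hconn a ha
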